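/- arXiv:1711.04643 — 2 statements merged into one kernel-verified Lean document; each statement's English description precedes it below -/
import Mathlib

section
/- Let f be complex analytic on a neighborhood of (0,0) ∈ ℂ × ℂ, let α : ℂ → ℂ be analytic near 0 with α(0) = 0, and let e ≥ 1 be a natural number. Assume there exists u₁ ∈ ℂ such that the functions y ↦ f_x(α(y) + u₁ y^e, y) and y ↦ f_y(α(y) + u₁ y^e, y) do not both vanish identically near 0. Then there exist L ∈ ℕ and a closed discrete subset S ⊆ ℂ such that for every u ∈ ℂ: min( ord₀(y ↦ f_x(α(y) + u y^e, y)), ord₀(y ↦ f_y(α(y) + u y^e, y)) ) ≥ L, with equality for every u ∉ S. (In other words, for generic u ∈ ℂ the order of the gradient of f along the perturbed arc α(y) + u y^e is the same number L.) -/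
open Filter

/-- The vanishing order at `0` of a function `u : ℂ → ℂ`: the least `n` such that the
`n`-th Taylor coefficient of `u` at `0` is nonzero, in `ℕ∞` (`⊤` if none is). -/
noncomputable def ord₀ (u : ℂ → ℂ) : ℕ∞ :=
  sInf ((fun n : ℕ => (n : ℕ∞)) '' {n : ℕ | iteratedDeriv n u 0 ≠ 0})

/-! The arcs `y ↦ (α y + u yᵉ, y)` all pass through the origin, so the pulled-back partial
derivatives `g (u, y) = f_x (α y + u yᵉ, y)` and `h (u, y) = f_y (α y + u yᵉ, y)` are analytic
at every point `(u, 0)`. Hence the `n`-th Taylor coefficients in `y` of `g (u, ·)` and `h (u, ·)`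
are entire functions of `u`. Let `L` be the first `n` at which this pair of coefficients is not
identically zero in `u`: every arc has order at least `L`, with equality off the zero set of a
nonzero entire function, which is closed and discrete by the identity theorem. -/

open Topology Set

section Analytic

variable {𝕜 E : Type*} [NontriviallyNormedField 𝕜] [NormedAddCommGroup E] [NormedSpace 𝕜 E]

theorem AnalyticAt.eventually_eq_zero_of_forall_iteratedDeriv_eq_zero [CharZero 𝕜]
    [CompleteSpace E] {w : 𝕜 → E} {z₀ : 𝕜} (hw : AnalyticAt 𝕜 w z₀)
    (h : ∀ n, iteratedDeriv n w z₀ = 0) : ∀ᶠ z in 𝓝 z₀, w z = 0 :=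
  analyticOrderAt_eq_top.1 <| ENat.eq_top_iff_forall_ge.2 fun _ =>
    (natCast_le_analyticOrderAt_iff_iteratedDeriv_eq_zero hw).2 fun i _ => h i

theorem DifferentiableAt.hasDerivAt_comp_prodMk_right {H : 𝕜 × 𝕜 → E} {q : 𝕜 × 𝕜}
    (hH : DifferentiableAt 𝕜 H q) :
    HasDerivAt (fun y => H (q.1, y)) (fderiv 𝕜 H q (0, 1)) q.2 :=
  hH.hasFDerivAt.comp_hasDerivAt q.2 ((hasDerivAt_const q.2 q.1).prodMk (hasDerivAt_id q.2))

theorem AnalyticAt.iteratedDeriv_snd [CompleteSpace E] {G : 𝕜 × 𝕜 → E} {p : 𝕜 × 𝕜}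
    (hG : AnalyticAt 𝕜 G p) (n : ℕ) :
    AnalyticAt 𝕜 (fun q : 𝕜 × 𝕜 => iteratedDeriv n (fun y => G (q.1, y)) q.2) p := by
  induction n with
  | zero => simpa using hG
  | succ n ih =>
    have hpartial : (fun q : 𝕜 × 𝕜 => fderiv 𝕜
        (fun q : 𝕜 × 𝕜 => iteratedDeriv n (fun y => G (q.1, y)) q.2) q (0, 1)) =ᶠ[𝓝 p]
        fun q => iteratedDeriv (n + 1) (fun y => G (q.1, y)) q.2 := by
      filter_upwards [ih.eventually_analyticAt] with q hq
      rw [iteratedDeriv_succ]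
      exact hq.differentiableAt.hasDerivAt_comp_prodMk_right.deriv.symm
    exact (((ContinuousLinearMap.apply 𝕜 E ((0 : 𝕜), (1 : 𝕜))).analyticAt _).comp
      ih.fderiv).congr hpartial

theorem AnalyticAt.iteratedDeriv_snd_eval [CompleteSpace E] {G : 𝕜 × 𝕜 → E} {u₀ y₀ : 𝕜}
    (hG : AnalyticAt 𝕜 G (u₀, y₀)) (n : ℕ) :
    AnalyticAt 𝕜 (fun u => iteratedDeriv n (fun y => G (u, y)) y₀) u₀ :=
  (hG.iteratedDeriv_snd n).comp_of_eq (analyticAt_id.prod analyticAt_const) rfl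

theorem AnalyticOnNhd.isClosed_and_discrete_preimage_zero [ConnectedSpace 𝕜] {c : 𝕜 → E}
    (hc : AnalyticOnNhd 𝕜 c univ) {u₀ : 𝕜} (hu₀ : c u₀ ≠ 0) :
    IsClosed (c ⁻¹' {0}) ∧ DiscreteTopology (c ⁻¹' {0}) := by
  obtain ⟨hclosed, hdiscrete⟩ := compl_mem_codiscrete_iff.1 (hc.preimage_zero_mem_codiscrete hu₀)
  exact ⟨hclosed, isDiscrete_iff_discreteTopology.1 hdiscrete⟩

theorem exists_first_ne_zero_off_closed_discrete [ConnectedSpace 𝕜] (c : ℕ → 𝕜 → E)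
    (hc : ∀ n, AnalyticOnNhd 𝕜 (c n) univ) (hne : ∃ n u, c n u ≠ 0) :
    ∃ (L : ℕ) (S : Set 𝕜), IsClosed S ∧ DiscreteTopology S ∧
      (∀ n < L, ∀ u, c n u = 0) ∧ ∀ u ∉ S, c L u ≠ 0 := by
  classical
  obtain ⟨u₀, hu₀⟩ := Nat.find_spec hne
  obtain ⟨hclosed, hdiscrete⟩ := (hc _).isClosed_and_discrete_preimage_zero hu₀
  refine ⟨Nat.find hne, _, hclosed, hdiscrete, fun n hn u => ?_, fun u hu => hu⟩
  by_contra hu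
  exact Nat.find_min hne hn ⟨u, hu⟩

end Analytic

theorem natCast_le_ord₀_iff {w : ℂ → ℂ} {L : ℕ} :
    (L : ℕ∞) ≤ ord₀ w ↔ ∀ n < L, iteratedDeriv n w 0 = 0 := by
  refine ⟨fun hL n hn => ?_, fun hw => le_sInf ?_⟩
  · by_contra h
    exact hn.not_ge (Nat.cast_le.1 (hL.trans (sInf_le ⟨n, h, rfl⟩)))
  · rintro _ ⟨n, hn, rfl⟩
    exact Nat.cast_le.2 (not_lt.1 fun h => hn (hw n h))

theorem ord₀_le_of_iteratedDeriv_ne_zero {w : ℂ → ℂ} {n : ℕ} (hw : iteratedDeriv n w 0 ≠ 0) :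
    ord₀ w ≤ n :=
  sInf_le ⟨n, hw, rfl⟩

theorem natCast_le_min_ord₀ {w₁ w₂ : ℂ → ℂ} {L : ℕ}
    (h : ∀ n < L, iteratedDeriv n w₁ 0 = 0 ∧ iteratedDeriv n w₂ 0 = 0) :
    (L : ℕ∞) ≤ min (ord₀ w₁) (ord₀ w₂) :=
  le_min (natCast_le_ord₀_iff.2 fun n hn => (h n hn).1)
    (natCast_le_ord₀_iff.2 fun n hn => (h n hn).2)

theorem min_ord₀_le {w₁ w₂ : ℂ → ℂ} {L : ℕ}
    (h : iteratedDeriv L w₁ 0 ≠ 0 ∨ iteratedDeriv L w₂ 0 ≠ 0) :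
    min (ord₀ w₁) (ord₀ w₂) ≤ L :=
  h.elim (fun h₁ => min_le_of_left_le (ord₀_le_of_iteratedDeriv_ne_zero h₁))
    (fun h₂ => min_le_of_right_le (ord₀_le_of_iteratedDeriv_ne_zero h₂))

theorem exists_generic_min_ord₀ {g h : ℂ × ℂ → ℂ} (hg : ∀ u, AnalyticAt ℂ g (u, 0))
    (hh : ∀ u, AnalyticAt ℂ h (u, 0))
    (hne : ∃ u₁, ¬ ((∀ᶠ y in 𝓝 0, g (u₁, y) = 0) ∧ ∀ᶠ y in 𝓝 0, h (u₁, y) = 0)) :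
    ∃ (L : ℕ) (S : Set ℂ), IsClosed S ∧ DiscreteTopology S ∧
      (∀ u, (L : ℕ∞) ≤ min (ord₀ fun y => g (u, y)) (ord₀ fun y => h (u, y))) ∧
      ∀ u ∉ S, min (ord₀ fun y => g (u, y)) (ord₀ fun y => h (u, y)) = L := by
  set c : ℕ → ℂ → ℂ × ℂ := fun n u =>
    (iteratedDeriv n (fun y => g (u, y)) 0, iteratedDeriv n (fun y => h (u, y)) 0)
  have hc : ∀ n, AnalyticOnNhd ℂ (c n) univ := fun n u _ =>
    ((hg u).iteratedDeriv_snd_eval n).prod ((hh u).iteratedDeriv_snd_eval n)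
  have hcne : ∃ n u, c n u ≠ 0 := by
    obtain ⟨u₁, hu₁⟩ := hne
    by_contra! hzero
    have hslice : ∀ G : ℂ × ℂ → ℂ, AnalyticAt ℂ G (u₁, 0) →
        AnalyticAt ℂ (fun y => G (u₁, y)) 0 := fun G hG =>
      hG.comp_of_eq (analyticAt_const.prod analyticAt_id) rfl
    exact hu₁ ⟨(hslice g (hg u₁)).eventually_eq_zero_of_forall_iteratedDeriv_eq_zero
        fun n => (Prod.mk_eq_zero.1 (hzero n u₁)).1,
      (hslice h (hh u₁)).eventually_eq_zero_of_forall_iteratedDeriv_eq_zero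
        fun n => (Prod.mk_eq_zero.1 (hzero n u₁)).2⟩
  obtain ⟨L, S, hS, hSd, hlow, hgen⟩ := exists_first_ne_zero_off_closed_discrete c hc hcne
  have hle : ∀ u, (L : ℕ∞) ≤ min (ord₀ fun y => g (u, y)) (ord₀ fun y => h (u, y)) :=
    fun u => natCast_le_min_ord₀ fun n hn => Prod.mk_eq_zero.1 (hlow n hn u)
  exact ⟨L, S, hS, hSd, hle, fun u hu =>
    le_antisymm (min_ord₀_le (not_and_or.1 (mt Prod.mk_eq_zero.2 (hgen u hu)))) (hle u)⟩

/-- Let `f` be analytic near `(0,0)`, `α` analytic near `0` with `α(0)=0`,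
and `e ≥ 1`. If for some `u₁` the two functions `y ↦ f_x(α(y)+u₁ yᵉ, y)` and
`y ↦ f_y(α(y)+u₁ yᵉ, y)` do not both vanish identically near `0`, then there are `L ∈ ℕ`
and a closed discrete set `S ⊆ ℂ` such that for every `u` the minimum of the vanishing
orders of `y ↦ f_x(α(y)+u yᵉ, y)` and `y ↦ f_y(α(y)+u yᵉ, y)` is `≥ L`, with equality for
every `u ∉ S` (so for generic `u` the order of the gradient along the perturbed arc is `L`). -/
theorem generic_gradient_order_of_perturbed_arc
    (f : ℂ × ℂ → ℂ) (hf : AnalyticAt ℂ f (0, 0))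
    (α : ℂ → ℂ) (hα : AnalyticAt ℂ α 0) (hα0 : α 0 = 0)
    (e : ℕ) (he : 1 ≤ e)
    (hne : ∃ u₁ : ℂ,
      ¬ ((∀ᶠ y in nhds (0 : ℂ), fderiv ℂ f (α y + u₁ * y ^ e, y) (1, 0) = 0) ∧
         (∀ᶠ y in nhds (0 : ℂ), fderiv ℂ f (α y + u₁ * y ^ e, y) (0, 1) = 0))) :
    ∃ (L : ℕ) (S : Set ℂ), IsClosed S ∧ DiscreteTopology S ∧
      (∀ u : ℂ, (L : ℕ∞) ≤
        min (ord₀ (fun y => fderiv ℂ f (α y + u * y ^ e, y) (1, 0)))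
            (ord₀ (fun y => fderiv ℂ f (α y + u * y ^ e, y) (0, 1)))) ∧
      (∀ u ∉ S,
        min (ord₀ (fun y => fderiv ℂ f (α y + u * y ^ e, y) (1, 0)))
            (ord₀ (fun y => fderiv ℂ f (α y + u * y ^ e, y) (0, 1))) = (L : ℕ∞)) := by
  have harc : ∀ u : ℂ, AnalyticAt ℂ (fun p : ℂ × ℂ => (α p.2 + p.1 * p.2 ^ e, p.2)) (u, 0) :=
    fun u => ((hα.comp_of_eq analyticAt_snd rfl).add
      (analyticAt_fst.mul (analyticAt_snd.pow e))).prod analyticAt_snd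
  have harc0 : ∀ u : ℂ, (α 0 + u * 0 ^ e, (0 : ℂ)) = (0, 0) := fun u => by
    simp [hα0, zero_pow (Nat.one_le_iff_ne_zero.1 he)]
  have hgrad : ∀ (v : ℂ × ℂ) (u : ℂ),
      AnalyticAt ℂ (fun p : ℂ × ℂ => fderiv ℂ f (α p.2 + p.1 * p.2 ^ e, p.2) v) (u, 0) :=
    fun v u => ((ContinuousLinearMap.apply ℂ ℂ v).analyticAt _).comp
      (hf.fderiv.comp_of_eq (harc u) (harc0 u))
  exact exists_generic_min_ord₀
    (g := fun p => fderiv ℂ f (α p.2 + p.1 * p.2 ^ e, p.2) (1, 0))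
    (h := fun p => fderiv ℂ f (α p.2 + p.1 * p.2 ^ e, p.2) (0, 1))
    (hgrad (1, 0)) (hgrad (0, 1)) hne
end

section
/- Let f be complex analytic on a neighborhood of (0,0) ∈ ℂ × ℂ and let α : ℂ → ℂ be analytic near 0 with α(0) = 0. For each natural number e ≥ 1 define Λ(e) := inf over u ∈ ℂ of min( ord₀(y ↦ f_x(α(y) + u y^e, y)), ord₀(y ↦ f_y(α(y) + u y^e, y)) ), an element of ℕ ∪ {∞}. Then: (i) Λ is monotone nondecreasing, i.e. e ≤ e' implies Λ(e) ≤ Λ(e'); and (ii) if the functions y ↦ f_x(α(y), y) and y ↦ f_y(α(y), y) do not both vanish identically near 0 and L denotes the minimum of their vanishing orders at 0, then Λ(e) = L for every e > L. (This is the monotonicity and eventual stabilization of the generic gradient order L_gr(α,e) in the perturbation degree e.) -/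
open Filter

/-- The generic gradient order `Λ(e)`: the infimum over `u ∈ ℂ` of the minimum of the
vanishing orders at `0` of `y ↦ f_x(α(y)+u yᵉ, y)` and `y ↦ f_y(α(y)+u yᵉ, y)`. -/
noncomputable def gradOrdPert (f : ℂ × ℂ → ℂ) (α : ℂ → ℂ) (e : ℕ) : ℕ∞ :=
  ⨅ u : ℂ,
    min (ord₀ (fun y => fderiv ℂ f (α y + u * y ^ e, y) (1, 0)))
        (ord₀ (fun y => fderiv ℂ f (α y + u * y ^ e, y) (0, 1)))

/-! Both parts rest on one estimate. Let `G` be analytic at the origin and let `γ` vanish to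
order `k ≥ 1`. If `∂ₓⁱ ∂ᵧʲ G (0, 0) = 0` whenever `i k + j < N`, then `y ↦ G (γ y, y)` vanishes
to order `N`. Indeed, its derivative is `γ' · G_x (γ y, y) + G_y (γ y, y)`; the functions `G_y`
and `G_x` satisfy the same hypothesis with `N - 1` and `N - k` in place of `N`, and `γ'` vanishes
to order `k - 1`, so strong induction on `N` gives order `N - 1` for the derivative.

For monotonicity, take `G (c, y) = f_v (α y + c yᵉ, y)`, `γ y = u y^(e' - e)` and `k = 1`: every
vertical slice `G (c, ·)` vanishes to order `Λ(e)`, so for `j < Λ(e)` the function `∂ᵧʲ G` vanishes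
on the `x`-axis, and hence so do all its `x`-derivatives. For stabilization, take
`G (x, y) = f_v (α y + x, y) - f_v (α y, y)`, `γ y = u yᵉ` and `k = N = e`: `G` vanishes on the
`y`-axis, so the perturbation by `u yᵉ` changes `f_v` along the curve only at order `≥ e > L`. -/

open Topology

section PartialDeriv

variable (𝕜 : Type*) [NontriviallyNormedField 𝕜]
  {E F : Type*} [NormedAddCommGroup E] [NormedSpace 𝕜 E] [NormedAddCommGroup F] [NormedSpace 𝕜 F]

noncomputable def partialDeriv (v : E) (G : E → F) : E → F := fun p => fderiv 𝕜 G p v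

variable {𝕜} {G H : E → F} {p : E}

theorem partialDeriv_congr {v : E} (h : G =ᶠ[𝓝 p] H) :
    partialDeriv 𝕜 v G =ᶠ[𝓝 p] partialDeriv 𝕜 v H := by
  filter_upwards [h.fderiv (𝕜 := 𝕜)] with q hq
  simp only [partialDeriv, hq]

theorem iterate_partialDeriv_congr {v : E} (h : G =ᶠ[𝓝 p] H) (n : ℕ) :
    (partialDeriv 𝕜 v)^[n] G =ᶠ[𝓝 p] (partialDeriv 𝕜 v)^[n] H := by
  induction n with
  | zero => exact h
  | succ n ih =>
    simp only [Function.iterate_succ_apply']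
    exact partialDeriv_congr ih

theorem hasDerivAt_comp_add_smul {v : E} {t : 𝕜} (hG : DifferentiableAt 𝕜 G (p + t • v)) :
    HasDerivAt (fun s : 𝕜 => G (p + s • v)) (partialDeriv 𝕜 v G (p + t • v)) t :=
  hG.hasFDerivAt.comp_hasDerivAt t (by simpa using ((hasDerivAt_id t).smul_const v).const_add p)

variable [CompleteSpace F]

theorem analyticAt_partialDeriv (hG : AnalyticAt 𝕜 G p) (v : E) :
    AnalyticAt 𝕜 (partialDeriv 𝕜 v G) p :=
  ((ContinuousLinearMap.apply 𝕜 F v).analyticAt _).comp hG.fderiv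

theorem analyticAt_iterate_partialDeriv (hG : AnalyticAt 𝕜 G p) (v : E) (n : ℕ) :
    AnalyticAt 𝕜 ((partialDeriv 𝕜 v)^[n] G) p := by
  induction n with
  | zero => exact hG
  | succ n ih => rw [Function.iterate_succ_apply']; exact analyticAt_partialDeriv ih v

theorem AnalyticAt.partialDeriv_comm (hG : AnalyticAt 𝕜 G p) (v w : E) :
    partialDeriv 𝕜 v (partialDeriv 𝕜 w G) p = partialDeriv 𝕜 w (partialDeriv 𝕜 v G) p := by
  have hfd : DifferentiableAt 𝕜 (fderiv 𝕜 G) p := hG.fderiv.differentiableAt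
  have apply_eq (v w : E) :
      partialDeriv 𝕜 w (partialDeriv 𝕜 v G) p = fderiv 𝕜 (fderiv 𝕜 G) p w v := by
    change fderiv 𝕜 (fun q => fderiv 𝕜 G q v) p w = _
    rw [fderiv_clm_apply hfd (differentiableAt_const v)]
    simp
  rw [apply_eq, apply_eq, hG.contDiffAt.isSymmSndFDerivAt_of_omega]

theorem AnalyticAt.iterate_partialDeriv_comm (hG : AnalyticAt 𝕜 G p) (v w : E) (n : ℕ) :
    (partialDeriv 𝕜 v)^[n] (partialDeriv 𝕜 w G) =ᶠ[𝓝 p]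
      partialDeriv 𝕜 w ((partialDeriv 𝕜 v)^[n] G) := by
  induction n generalizing G with
  | zero => rfl
  | succ n ih =>
    have hcomm : partialDeriv 𝕜 v (partialDeriv 𝕜 w G) =ᶠ[𝓝 p]
        partialDeriv 𝕜 w (partialDeriv 𝕜 v G) := by
      filter_upwards [hG.eventually_analyticAt] with q hq using hq.partialDeriv_comm v w
    simp only [Function.iterate_succ_apply]
    exact (iterate_partialDeriv_congr hcomm n).trans (ih (analyticAt_partialDeriv hG v))

theorem AnalyticAt.iteratedDeriv_comp_add_smul (hG : AnalyticAt 𝕜 G p) (v : E) (n : ℕ) :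
    iteratedDeriv n (fun t : 𝕜 => G (p + t • v)) 0 = (partialDeriv 𝕜 v)^[n] G p := by
  induction n generalizing G with
  | zero => simp
  | succ n ih =>
    have hline : Tendsto (fun t : 𝕜 => p + t • v) (𝓝 0) (𝓝 p) := by
      simpa using ((continuous_id.smul continuous_const).const_add p).tendsto (0 : 𝕜)
    have hderiv : deriv (fun t : 𝕜 => G (p + t • v)) =ᶠ[𝓝 0]
        fun t => partialDeriv 𝕜 v G (p + t • v) := by
      filter_upwards [hline.eventually hG.eventually_analyticAt] with t ht
      exact (hasDerivAt_comp_add_smul ht.differentiableAt).deriv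
    rw [iteratedDeriv_succ', hderiv.iteratedDeriv_eq, ih (analyticAt_partialDeriv hG v),
      Function.iterate_succ_apply]

theorem AnalyticAt.iterate_partialDeriv_eq_zero_of_eventually_eq_zero (hG : AnalyticAt 𝕜 G p)
    {v : E} (hzero : ∀ᶠ t : 𝕜 in 𝓝 0, G (p + t • v) = 0) (n : ℕ) :
    (partialDeriv 𝕜 v)^[n] G p = 0 := by
  rw [← hG.iteratedDeriv_comp_add_smul, EventuallyEq.iteratedDeriv_eq n (g := fun _ => 0) hzero,
    iteratedDeriv_const]
  simp

end PartialDeriv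

section GraphOrder

variable {𝕜 : Type*} [NontriviallyNormedField 𝕜] {G : 𝕜 × 𝕜 → 𝕜} {γ : 𝕜 → 𝕜}

theorem AnalyticAt.comp_graph {x : 𝕜} (hG : AnalyticAt 𝕜 G (γ x, x)) (hγ : AnalyticAt 𝕜 γ x) :
    AnalyticAt 𝕜 (fun y => G (γ y, y)) x :=
  hG.comp (f := fun y => (γ y, y)) (hγ.prod analyticAt_id)

theorem hasDerivAt_comp_graph {y γ' : 𝕜} (hG : DifferentiableAt 𝕜 G (γ y, y))
    (hγ : HasDerivAt γ γ' y) :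
    HasDerivAt (fun t => G (γ t, t))
      (γ' * partialDeriv 𝕜 (1, 0) G (γ y, y) + partialDeriv 𝕜 (0, 1) G (γ y, y)) y := by
  have hvec : ((γ', 1) : 𝕜 × 𝕜) = γ' • ((1 : 𝕜), (0 : 𝕜)) + ((0 : 𝕜), (1 : 𝕜)) := by simp
  have h := hG.hasFDerivAt.comp_hasDerivAt (f := fun t => (γ t, t)) y (hγ.prodMk (hasDerivAt_id y))
  rwa [hvec, map_add, map_smul, smul_eq_mul] at h

variable [CompleteSpace 𝕜]

theorem AnalyticAt.deriv_comp_graph {x : 𝕜} (hG : AnalyticAt 𝕜 G (γ x, x))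
    (hγ : AnalyticAt 𝕜 γ x) :
    deriv (fun y => G (γ y, y)) =ᶠ[𝓝 x]
      (fun y => deriv γ y * partialDeriv 𝕜 (1, 0) G (γ y, y)) +
        fun y => partialDeriv 𝕜 (0, 1) G (γ y, y) := by
  filter_upwards [(hγ.prod analyticAt_id).continuousAt.eventually hG.eventually_analyticAt,
    hγ.eventually_analyticAt] with y hGy hγy
  exact (hasDerivAt_comp_graph hGy.differentiableAt hγy.differentiableAt.hasDerivAt).deriv

variable [CharZero 𝕜]

theorem natCast_le_analyticOrderAt_comp_graph {k N : ℕ} (hk : 0 < k) (hG : AnalyticAt 𝕜 G (0, 0))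
    (hγ : AnalyticAt 𝕜 γ 0) (hγk : (k : ℕ∞) ≤ analyticOrderAt γ 0)
    (hN : ∀ i j, i * k + j < N →
      (partialDeriv 𝕜 (1, 0))^[i] ((partialDeriv 𝕜 (0, 1))^[j] G) (0, 0) = 0) :
    (N : ℕ∞) ≤ analyticOrderAt (fun y => G (γ y, y)) 0 := by
  induction N using Nat.strong_induction_on generalizing G with | _ N ih
  obtain _ | M := N
  · simp
  have hγ0 : γ 0 = 0 := apply_eq_zero_of_analyticOrderAt_ne_zero
    (lt_of_lt_of_le (by exact_mod_cast hk) hγk).ne'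
  have hgraph {H : 𝕜 × 𝕜 → 𝕜} (hH : AnalyticAt 𝕜 H (0, 0)) :
      AnalyticAt 𝕜 (fun y => H (γ y, y)) 0 :=
    AnalyticAt.comp_graph (by simpa [hγ0] using hH) hγ
  have hG0 : G (γ 0, 0) = 0 := by simpa [hγ0] using hN 0 0 (by omega)
  have hderiv := AnalyticAt.deriv_comp_graph (by simpa [hγ0] using hG) hγ
  rw [Nat.cast_succ, ← analyticOrderAt_deriv_ge_iff (hgraph hG) hG0, analyticOrderAt_congr hderiv]
  refine le_trans (le_min ?_ ?_) le_analyticOrderAt_add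
  · have hγ' : ((k - 1 : ℕ) : ℕ∞) ≤ analyticOrderAt (deriv γ) 0 := by
      rw [analyticOrderAt_deriv_ge_iff hγ hγ0, ← Nat.cast_add_one, Nat.sub_add_cancel hk]
      exact hγk
    have hGx : ((M + 1 - k : ℕ) : ℕ∞) ≤
        analyticOrderAt (fun y => partialDeriv 𝕜 (1, 0) G (γ y, y)) 0 := by
      refine ih _ (by omega) (analyticAt_partialDeriv hG _) fun i j hij => ?_
      rw [(iterate_partialDeriv_congr (hG.iterate_partialDeriv_comm (0, 1) (1, 0) j) i).eq_of_nhds,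
        ← Function.iterate_succ_apply]
      exact hN (i + 1) j (by rw [add_mul, one_mul]; omega)
    calc (M : ℕ∞) ≤ ((k - 1 : ℕ) : ℕ∞) + ((M + 1 - k : ℕ) : ℕ∞) := by norm_cast; omega
      _ ≤ analyticOrderAt (deriv γ) 0 +
            analyticOrderAt (fun y => partialDeriv 𝕜 (1, 0) G (γ y, y)) 0 := add_le_add hγ' hGx
      _ = _ := (analyticOrderAt_mul hγ.deriv (hgraph (analyticAt_partialDeriv hG _))).symm
  · refine ih M (by omega) (analyticAt_partialDeriv hG _) fun i j hij => ?_
    rw [← Function.iterate_succ_apply]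
    exact hN i (j + 1) (by omega)

theorem natCast_le_analyticOrderAt_comp_graph_of_slices {N : ℕ} (hG : ∀ c, AnalyticAt 𝕜 G (c, 0))
    (hslice : ∀ c, (N : ℕ∞) ≤ analyticOrderAt (fun y => G (c, y)) 0)
    (hγ : AnalyticAt 𝕜 γ 0) (hγ0 : γ 0 = 0) :
    (N : ℕ∞) ≤ analyticOrderAt (fun y => G (γ y, y)) 0 := by
  have hvert : ∀ j < N, ∀ c, (partialDeriv 𝕜 (0, 1))^[j] G (c, 0) = 0 := fun j hj c => by
    have hc : AnalyticAt 𝕜 (fun y => G (c, y)) 0 :=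
      (hG c).comp (f := fun y => (c, y)) (analyticAt_const.prod analyticAt_id)
    rw [← (hG c).iteratedDeriv_comp_add_smul]
    simpa using (natCast_le_analyticOrderAt_iff_iteratedDeriv_eq_zero hc).1 (hslice c) j hj
  refine natCast_le_analyticOrderAt_comp_graph one_pos (hG 0) hγ
    (by simpa [Order.one_le_iff_ne_zero, analyticOrderAt_ne_zero] using ⟨hγ, hγ0⟩)
    fun i j hij => ?_
  exact AnalyticAt.iterate_partialDeriv_eq_zero_of_eventually_eq_zero
    (analyticAt_iterate_partialDeriv (hG 0) _ j)
    (Eventually.of_forall fun t => by simpa using hvert j (by omega) t) i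

theorem natCast_le_analyticOrderAt_comp_graph_of_eq_zero_on_axis {k : ℕ} (hk : 0 < k)
    (hG : AnalyticAt 𝕜 G (0, 0)) (haxis : ∀ᶠ y in 𝓝 0, G (0, y) = 0)
    (hγ : AnalyticAt 𝕜 γ 0) (hγk : (k : ℕ∞) ≤ analyticOrderAt γ 0) :
    (k : ℕ∞) ≤ analyticOrderAt (fun y => G (γ y, y)) 0 := by
  refine natCast_le_analyticOrderAt_comp_graph hk hG hγ hγk fun i j hij => ?_
  obtain rfl : i = 0 := by
    by_contra hi
    have := Nat.le_mul_of_pos_left k (Nat.pos_of_ne_zero hi)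
    omega
  exact hG.iterate_partialDeriv_eq_zero_of_eventually_eq_zero (by simpa using haxis) j

end GraphOrder

section Perturbation

variable {𝕜 : Type*} [NontriviallyNormedField 𝕜] {g : 𝕜 × 𝕜 → 𝕜} {α : 𝕜 → 𝕜}

theorem analyticAt_comp_perturb (hg : AnalyticAt 𝕜 g (0, 0)) (hα : AnalyticAt 𝕜 α 0)
    (hα0 : α 0 = 0) {e : ℕ} (he : 0 < e) (c : 𝕜) :
    AnalyticAt 𝕜 (fun p : 𝕜 × 𝕜 => g (α p.2 + p.1 * p.2 ^ e, p.2)) (c, 0) := by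
  have hαs : AnalyticAt 𝕜 (fun p : 𝕜 × 𝕜 => α p.2) (c, 0) :=
    hα.comp (f := fun p : 𝕜 × 𝕜 => p.2) analyticAt_snd
  exact hg.fun_comp_of_eq ((hαs.add (analyticAt_fst.mul (analyticAt_snd.pow e))).prod
    analyticAt_snd) (by simp [hα0, he.ne'])

variable [CharZero 𝕜] [CompleteSpace 𝕜]

theorem iInf_le_analyticOrderAt_comp_perturb (hg : AnalyticAt 𝕜 g (0, 0)) (hα : AnalyticAt 𝕜 α 0)
    (hα0 : α 0 = 0) {e e' : ℕ} (he : 0 < e) (hee' : e ≤ e') (u : 𝕜) :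
    ⨅ c : 𝕜, analyticOrderAt (fun y => g (α y + c * y ^ e, y)) 0 ≤
      analyticOrderAt (fun y => g (α y + u * y ^ e', y)) 0 := by
  obtain rfl | hlt := hee'.eq_or_lt
  · exact iInf_le _ u
  refine ENat.forall_natCast_le_iff_le.1 fun N hN => ?_
  have h := natCast_le_analyticOrderAt_comp_graph_of_slices
    (G := fun p : 𝕜 × 𝕜 => g (α p.2 + p.1 * p.2 ^ e, p.2)) (γ := fun y => u * y ^ (e' - e))
    (analyticAt_comp_perturb hg hα hα0 he) (fun c => hN.trans (iInf_le _ c))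
    (analyticAt_const.mul (analyticAt_id.pow _)) (by simp [(Nat.sub_pos_of_lt hlt).ne'])
  simpa only [mul_assoc, ← pow_add, Nat.sub_add_cancel hee'] using h

theorem min_le_analyticOrderAt_comp_perturb (hg : AnalyticAt 𝕜 g (0, 0)) (hα : AnalyticAt 𝕜 α 0)
    (hα0 : α 0 = 0) {e : ℕ} (he : 0 < e) (u : 𝕜) :
    min (e : ℕ∞) (analyticOrderAt (fun y => g (α y, y)) 0) ≤
      analyticOrderAt (fun y => g (α y + u * y ^ e, y)) 0 := by
  set G : 𝕜 × 𝕜 → 𝕜 := fun p => g (α p.2 + p.1, p.2) - g (α p.2, p.2)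
  have hG : AnalyticAt 𝕜 G (0, 0) := by
    have hαs : AnalyticAt 𝕜 (fun p : 𝕜 × 𝕜 => α p.2) (0, 0) :=
      hα.comp (f := fun p : 𝕜 × 𝕜 => p.2) analyticAt_snd
    refine (hg.fun_comp_of_eq ((hαs.add analyticAt_fst).prod analyticAt_snd) ?_).sub
      (hg.fun_comp_of_eq (hαs.prod analyticAt_snd) ?_) <;> simp [hα0]
  have hγ : AnalyticAt 𝕜 (fun y => u * y ^ e) 0 := analyticAt_const.mul (analyticAt_id.pow _)
  have hγe : (e : ℕ∞) ≤ analyticOrderAt (fun y => u * y ^ e) 0 :=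
    (natCast_le_analyticOrderAt hγ).2
      ⟨fun _ => u, analyticAt_const, Eventually.of_forall fun y => by simp [mul_comm]⟩
  have hsplit : (fun y => g (α y + u * y ^ e, y)) =
      (fun y => G (u * y ^ e, y)) + fun y => g (α y, y) := by
    ext y; simp [G]
  rw [hsplit]
  refine le_trans (min_le_min_right _ ?_) le_analyticOrderAt_add
  exact natCast_le_analyticOrderAt_comp_graph_of_eq_zero_on_axis he hG
    (Eventually.of_forall fun y => by simp [G]) hγ hγe

end Perturbation

theorem ord₀_eq_analyticOrderAt {u : ℂ → ℂ} (hu : AnalyticAt ℂ u 0) :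
    ord₀ u = analyticOrderAt u 0 := by
  refine ENat.eq_of_forall_natCast_le_iff fun n => ?_
  rw [natCast_le_analyticOrderAt_iff_iteratedDeriv_eq_zero hu, ord₀, le_sInf_iff]
  simp only [Set.forall_mem_image, Set.mem_ofPred_eq, Nat.cast_le]
  exact forall_congr' fun m => by rw [not_imp_comm, not_le]

theorem gradOrdPert_eq_iInf_analyticOrderAt {f : ℂ × ℂ → ℂ} (hf : AnalyticAt ℂ f (0, 0))
    {α : ℂ → ℂ} (hα : AnalyticAt ℂ α 0) (hα0 : α 0 = 0) {e : ℕ} (he : 0 < e) :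
    gradOrdPert f α e = ⨅ u : ℂ,
      min (analyticOrderAt (fun y => fderiv ℂ f (α y + u * y ^ e, y) (1, 0)) 0)
        (analyticOrderAt (fun y => fderiv ℂ f (α y + u * y ^ e, y) (0, 1)) 0) := by
  have hanalytic (v : ℂ × ℂ) (u : ℂ) :
      AnalyticAt ℂ (fun y => fderiv ℂ f (α y + u * y ^ e, y) v) 0 :=
    (analyticAt_comp_perturb (analyticAt_partialDeriv hf v) hα hα0 he u).comp_graph
      (γ := fun _ => u) analyticAt_const
  refine iInf_congr fun u => ?_
  rw [ord₀_eq_analyticOrderAt (hanalytic _ u), ord₀_eq_analyticOrderAt (hanalytic _ u)]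

/-- For `f` analytic near `(0,0)` and `α` analytic near `0` with `α(0)=0`,
the generic gradient order `Λ(e) = gradOrdPert f α e` is (i) monotone nondecreasing in
the perturbation degree `e ≥ 1`, and (ii) if `f_x` and `f_y` do not both vanish
identically along `α` near `0` and `L` is the minimum of their vanishing orders along
`α`, then `Λ(e) = L` for every `e > L`. -/
theorem generic_gradient_order_monotone_and_stabilizes
    (f : ℂ × ℂ → ℂ) (hf : AnalyticAt ℂ f (0, 0))
    (α : ℂ → ℂ) (hα : AnalyticAt ℂ α 0) (hα0 : α 0 = 0) :
    (∀ e e' : ℕ, 1 ≤ e → e ≤ e' → gradOrdPert f α e ≤ gradOrdPert f α e') ∧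
    (¬ ((∀ᶠ y in nhds (0 : ℂ), fderiv ℂ f (α y, y) (1, 0) = 0) ∧
        (∀ᶠ y in nhds (0 : ℂ), fderiv ℂ f (α y, y) (0, 1) = 0)) →
      ∀ L : ℕ,
        min (ord₀ (fun y => fderiv ℂ f (α y, y) (1, 0)))
            (ord₀ (fun y => fderiv ℂ f (α y, y) (0, 1))) = (L : ℕ∞) →
        ∀ e : ℕ, L < e → gradOrdPert f α e = (L : ℕ∞)) := by
  have hpd (v : ℂ × ℂ) := analyticAt_partialDeriv hf v
  refine ⟨fun e e' he hee' => ?_, fun _ L hL e hLe => ?_⟩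
  · rw [gradOrdPert_eq_iInf_analyticOrderAt hf hα hα0 he,
      gradOrdPert_eq_iInf_analyticOrderAt hf hα hα0 (by omega)]
    exact le_iInf fun u => le_min
      ((iInf_mono fun c => min_le_left _ _).trans
        (iInf_le_analyticOrderAt_comp_perturb (hpd _) hα hα0 he hee' u))
      ((iInf_mono fun c => min_le_right _ _).trans
        (iInf_le_analyticOrderAt_comp_perturb (hpd _) hα hα0 he hee' u))
  have horder (v : ℂ × ℂ) : ord₀ (fun y => fderiv ℂ f (α y, y) v) =
      analyticOrderAt (fun y => fderiv ℂ f (α y, y) v) 0 :=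
    ord₀_eq_analyticOrderAt
      (AnalyticAt.comp_graph (G := partialDeriv ℂ v f) (by simpa [hα0] using hpd v) hα)
  rw [horder, horder] at hL
  rw [gradOrdPert_eq_iInf_analyticOrderAt hf hα hα0 (by omega)]
  refine le_antisymm ((iInf_le _ 0).trans (by simpa using hL.le)) (le_iInf fun u => ?_)
  calc (L : ℕ∞) = min (e : ℕ∞) L := (min_eq_right (by exact_mod_cast hLe.le)).symm
    _ = min (min (e : ℕ∞) (analyticOrderAt (fun y => fderiv ℂ f (α y, y) (1, 0)) 0))
          (min (e : ℕ∞) (analyticOrderAt (fun y => fderiv ℂ f (α y, y) (0, 1)) 0)) := by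
      rw [← hL]; exact inf_inf_distrib_left _ _ _
    _ ≤ _ := min_le_min
      (min_le_analyticOrderAt_comp_perturb (hpd _) hα hα0 (by omega) u)
      (min_le_analyticOrderAt_comp_perturb (hpd _) hα hα0 (by omega) u)
end
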